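/- Let X and Y be independent nonnegative random variables, ρ > 0 and c ∈ (0,∞). Assume that lim_{t→∞} t^ρ · P(X > t) = c, that t ↦ t^{ρ+1} P(X > t) is bounded on every interval (0, a], and that E[Y^{ρ+ε}] < ∞ for some ε > 0. Then lim_{t→∞} t^ρ · P(X·Y > t) = c · E[Y^ρ]. -/
import Mathlib


open MeasureTheory Set Filter

/-- Breiman-type transfer theorem for the tail of a product of independent
nonnegative random variables: if `t^ρ P(X > t) → c ∈ (0,∞)`, `t^{ρ+1} P(X > t)` is
bounded on every `(0, a]`, and `E[Y^{ρ+ε}] < ∞` for some `ε > 0`, then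
`t^ρ P(XY > t) → c E[Y^ρ]`. -/
theorem stmt9 {Ω : Type*} [MeasurableSpace Ω] (μ : Measure Ω) [IsProbabilityMeasure μ]
    (X Y : Ω → ℝ) (hX : Measurable X) (hY : Measurable Y)
    (hXnn : ∀ ω, 0 ≤ X ω) (hYnn : ∀ ω, 0 ≤ Y ω)
    (hindep : ProbabilityTheory.IndepFun X Y μ)
    (ρ : ℝ) (hρ : 0 < ρ) (c : ℝ) (hc : 0 < c)
    (htail : Tendsto (fun t : ℝ => t ^ ρ * (μ {ω | t < X ω}).toReal) atTop (nhds c))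
    (hbdd : ∀ a : ℝ, 0 < a → ∃ C : ℝ, ∀ t ∈ Ioc (0 : ℝ) a,
      t ^ (ρ + 1) * (μ {ω | t < X ω}).toReal ≤ C)
    (ε : ℝ) (hε : 0 < ε)
    (hmom : Integrable (fun ω => Y ω ^ (ρ + ε)) μ) :
    Tendsto (fun t : ℝ => t ^ ρ * (μ {ω | t < X ω * Y ω}).toReal) atTop
      (nhds (c * ∫ ω, Y ω ^ ρ ∂μ)) := by
  set νX := μ.map X with hνXdef
  set νY := μ.map Y with hνYdef
  haveI : IsProbabilityMeasure νX := Measure.isProbabilityMeasure_map hX.aemeasurable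
  haveI : IsProbabilityMeasure νY := Measure.isProbabilityMeasure_map hY.aemeasurable
  have hνIoi : ∀ s : ℝ, μ {ω | s < X ω} = νX (Ioi s) := fun s => by
    rw [hνXdef, Measure.map_apply hX measurableSet_Ioi]; rfl
  set G : ℝ → ℝ := fun s => (νX (Ioi s)).toReal with hGdef
  have hG0 : ∀ s, 0 ≤ G s := fun s => ENNReal.toReal_nonneg
  have hG1 : ∀ s, G s ≤ 1 := fun s => by
    simpa using ENNReal.toReal_mono (b := 1) ENNReal.one_ne_top (prob_le_one (μ := νX) (s := Ioi s))
  have htail' : Tendsto (fun s : ℝ => s ^ ρ * G s) atTop (nhds c) := by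
    simpa only [hνIoi] using htail
  have hsmeas : ∀ t : ℝ, MeasurableSet {p : ℝ × ℝ | t < p.2 * p.1} := fun t =>
    measurableSet_lt measurable_const (measurable_snd.mul measurable_fst)
  have hg : ∀ t : ℝ, Measurable fun y : ℝ => νX {x | t < x * y} := fun t =>
    measurable_measure_prodMk_left (ν := νX) (hsmeas t)
  -- key product identity via independence
  have key : ∀ t : ℝ, μ {ω | t < X ω * Y ω} = ∫⁻ ω, νX {x | t < x * Y ω} ∂μ := by
    intro t
    have hmap : μ.map (fun ω => (Y ω, X ω)) = νY.prod νX :=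
      (ProbabilityTheory.indepFun_iff_map_prod_eq_prod_map_map hY.aemeasurable
        hX.aemeasurable).mp hindep.symm
    calc μ {ω | t < X ω * Y ω}
        = μ.map (fun ω => (Y ω, X ω)) {p : ℝ × ℝ | t < p.2 * p.1} := by
          rw [Measure.map_apply (hY.prodMk hX) (hsmeas t)]; rfl
      _ = (νY.prod νX) {p : ℝ × ℝ | t < p.2 * p.1} := by rw [hmap]
      _ = ∫⁻ y, νX {x | t < x * y} ∂νY := Measure.prod_apply (hsmeas t)
      _ = ∫⁻ ω, νX {x | t < x * Y ω} ∂μ := lintegral_map (hg t) hY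
  set φ : ℝ → Ω → ℝ := fun t ω => t ^ ρ * (νX {x | t < x * Y ω}).toReal with hφdef
  have heq : ∀ t : ℝ, t ^ ρ * (μ {ω | t < X ω * Y ω}).toReal = ∫ ω, φ t ω ∂μ := by
    intro t
    have hm : Measurable fun ω => νX {x | t < x * Y ω} := (hg t).comp hY
    rw [key t, ← integral_toReal hm.aemeasurable
      (Eventually.of_forall fun ω => measure_lt_top _ _), ← integral_const_mul]
  have hyρ_le : ∀ y : ℝ, 0 ≤ y → y ^ ρ ≤ 1 + y ^ (ρ + ε) := by
    intro y hy
    rcases le_or_gt y 1 with h1 | h1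
    · have h2 := Real.rpow_le_one hy h1 hρ.le
      have h3 : (0:ℝ) ≤ y ^ (ρ + ε) := Real.rpow_nonneg hy _
      linarith
    · have h2 := Real.rpow_le_rpow_of_exponent_le h1.le (by linarith : ρ ≤ ρ + ε)
      linarith
  obtain ⟨s0, hs0⟩ : ∃ s0 : ℝ, ∀ s ≥ s0, s ^ ρ * G s ≤ c + 1 := by
    have h := htail'.eventually (eventually_lt_nhds (lt_add_one c))
    rw [eventually_atTop] at h
    obtain ⟨s0, hs0⟩ := h
    exact ⟨s0, fun s hs => (hs0 s hs).le⟩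
  set s1 : ℝ := max s0 1 with hs1def
  have hs1pos : (0:ℝ) < s1 := lt_of_lt_of_le one_pos (le_max_right _ _)
  obtain ⟨C, hC⟩ := hbdd s1 hs1pos
  set K : ℝ := max (c + 1) (max C 1) with hKdef
  have hK1 : (1:ℝ) ≤ K := le_trans (le_max_right _ _) (le_max_right _ _)
  have hK0 : (0:ℝ) ≤ K := by linarith
  have hKc : c + 1 ≤ K := le_max_left _ _
  have hKC : C ≤ K := le_trans (le_max_left _ _) (le_max_right _ _)
  have hslice : ∀ t : ℝ, 0 < t → ∀ y : ℝ, 0 < y →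
      ({x : ℝ | t < x * y} : Set ℝ) = Ioi (t / y) := by
    intro t ht y hy
    ext x
    simp only [mem_setOf_eq, mem_Ioi]
    rw [div_lt_iff₀ hy]
  -- domination
  have hbound : ∀ t : ℝ, 1 ≤ t → ∀ ω : Ω, φ t ω ≤ K * (1 + Y ω ^ (ρ + ε)) := by
    intro t ht ω
    have htpos : (0:ℝ) < t := lt_of_lt_of_le one_pos ht
    have hrhs0 : (0:ℝ) ≤ 1 + Y ω ^ (ρ + ε) := by
      have := Real.rpow_nonneg (hYnn ω) (ρ + ε); linarith
    rcases eq_or_lt_of_le (hYnn ω) with h0 | hypos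
    · have hempty : ({x : ℝ | t < x * Y ω} : Set ℝ) = ∅ := by
        ext x
        simp only [mem_setOf_eq, mem_empty_iff_false, iff_false, not_lt, ← h0, mul_zero]
        exact htpos.le
      show t ^ ρ * (νX {x | t < x * Y ω}).toReal ≤ _
      rw [hempty]
      simp only [measure_empty, ENNReal.toReal_zero, mul_zero]
      exact mul_nonneg hK0 hrhs0
    · set y := Y ω with hy
      have hyne : y ≠ 0 := ne_of_gt hypos
      have hyρpos : (0:ℝ) < y ^ ρ := Real.rpow_pos_of_pos hypos ρ
      show t ^ ρ * (νX {x | t < x * y}).toReal ≤ K * (1 + y ^ (ρ + ε))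
      rw [hslice t htpos y hypos]
      have hGs0 := hG0 (t / y)
      have hGs1 := hG1 (t / y)
      have hspos : (0:ℝ) < t / y := div_pos htpos hypos
      have main : t ^ ρ * G (t / y) ≤ K * y ^ ρ := by
        rcases le_or_gt s1 (t / y) with hcase | hcase
        · have h1 : (t / y) ^ ρ * G (t / y) ≤ c + 1 :=
            hs0 _ (le_trans (le_max_left _ _) hcase)
          have htρ : t ^ ρ = y ^ ρ * (t / y) ^ ρ := by
            rw [Real.div_rpow htpos.le hypos.le]
            field_simp
          calc t ^ ρ * G (t / y) = y ^ ρ * ((t / y) ^ ρ * G (t / y)) := by rw [htρ]; ring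
            _ ≤ y ^ ρ * (c + 1) := mul_le_mul_of_nonneg_left h1 hyρpos.le
            _ ≤ K * y ^ ρ := by nlinarith
        · have h1 : (t / y) ^ (ρ + 1) * G (t / y) ≤ C := by
            have := hC (t / y) ⟨hspos, hcase.le⟩
            rwa [hνIoi] at this
          rcases le_or_gt y t with hyt | hyt
          · have hfact : t ^ ρ = y ^ (ρ + 1) / t * (t / y) ^ (ρ + 1) := by
              rw [Real.div_rpow htpos.le hypos.le, Real.rpow_add htpos, Real.rpow_one,
                Real.rpow_add hypos, Real.rpow_one]
              field_simp
            have h2 : y ^ (ρ + 1) / t ≤ y ^ ρ := by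
              rw [Real.rpow_add hypos, Real.rpow_one, div_le_iff₀ htpos]
              nlinarith
            calc t ^ ρ * G (t / y)
                = y ^ (ρ + 1) / t * ((t / y) ^ (ρ + 1) * G (t / y)) := by rw [hfact]; ring
              _ ≤ y ^ (ρ + 1) / t * C := by
                  apply mul_le_mul_of_nonneg_left h1
                  positivity
              _ ≤ y ^ ρ * C := by
                  apply mul_le_mul_of_nonneg_right h2
                  nlinarith [Real.rpow_pos_of_pos hspos (ρ + 1)]
              _ ≤ K * y ^ ρ := by nlinarith
          · calc t ^ ρ * G (t / y) ≤ t ^ ρ * 1 :=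
                mul_le_mul_of_nonneg_left hGs1 (Real.rpow_nonneg htpos.le ρ)
              _ = t ^ ρ := mul_one _
              _ ≤ y ^ ρ := Real.rpow_le_rpow htpos.le hyt.le hρ.le
              _ ≤ K * y ^ ρ := le_mul_of_one_le_left hyρpos.le hK1
      calc t ^ ρ * G (t / y) ≤ K * y ^ ρ := main
        _ ≤ K * (1 + y ^ (ρ + ε)) := mul_le_mul_of_nonneg_left (hyρ_le y hypos.le) hK0
  -- pointwise limit
  have hlim : ∀ ω : Ω, Tendsto (fun t => φ t ω) atTop (nhds (c * Y ω ^ ρ)) := by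
    intro ω
    rcases eq_or_lt_of_le (hYnn ω) with h0 | hypos
    · have hzero : ∀ᶠ t : ℝ in atTop, (0:ℝ) = φ t ω := by
        filter_upwards [eventually_gt_atTop (0:ℝ)] with t ht
        have hempty : ({x : ℝ | t < x * Y ω} : Set ℝ) = ∅ := by
          ext x
          simp only [mem_setOf_eq, mem_empty_iff_false, iff_false, not_lt, ← h0, mul_zero]
          exact ht.le
        show (0:ℝ) = t ^ ρ * (νX {x | t < x * Y ω}).toReal
        rw [hempty]
        simp
      rw [← h0, Real.zero_rpow hρ.ne', mul_zero]
      exact Tendsto.congr' hzero tendsto_const_nhds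
    · set y := Y ω with hy
      have hyne : y ≠ 0 := ne_of_gt hypos
      have h1 : Tendsto (fun t : ℝ => t / y) atTop atTop := tendsto_id.atTop_div_const hypos
      have h2 : Tendsto (fun t : ℝ => y ^ ρ * ((t / y) ^ ρ * G (t / y))) atTop
          (nhds (y ^ ρ * c)) := (htail'.comp h1).const_mul _
      have heqev : ∀ᶠ t : ℝ in atTop,
          y ^ ρ * ((t / y) ^ ρ * G (t / y)) = φ t ω := by
        filter_upwards [eventually_gt_atTop (0:ℝ)] with t ht
        show _ = t ^ ρ * (νX {x | t < x * y}).toReal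
        rw [hslice t ht y hypos]
        have htρ : t ^ ρ = y ^ ρ * (t / y) ^ ρ := by
          rw [Real.div_rpow ht.le hypos.le]
          field_simp
        rw [htρ]
        ring
      rw [mul_comm c]
      exact Tendsto.congr' heqev h2
  -- dominated convergence
  have hmain : Tendsto (fun t : ℝ => ∫ ω, φ t ω ∂μ) atTop
      (nhds (∫ ω, c * Y ω ^ ρ ∂μ)) := by
    apply tendsto_integral_filter_of_dominated_convergence
      (bound := fun ω => K * (1 + Y ω ^ (ρ + ε)))
    · filter_upwards with t
      exact ((((hg t).comp hY).ennreal_toReal).const_mul _).aestronglyMeasurable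
    · filter_upwards [eventually_ge_atTop (1:ℝ)] with t ht
      filter_upwards with ω
      rw [Real.norm_eq_abs, abs_of_nonneg]
      · exact hbound t ht ω
      · exact mul_nonneg (Real.rpow_nonneg (le_trans zero_le_one ht) _) ENNReal.toReal_nonneg
    · exact ((integrable_const (1:ℝ)).add hmom).const_mul K
    · exact Eventually.of_forall hlim
  have hfin : (∫ ω, c * Y ω ^ ρ ∂μ) = c * ∫ ω, Y ω ^ ρ ∂μ := integral_const_mul c _
  simp only [heq]
  rw [← hfin]
  exact hmain
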